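/- arXiv:2302.06248 — 6 statements merged into one kernel-verified Lean document; each statement's English description precedes it below -/
import Mathlib

section
/- For any word w over an alphabet and any n ≥ 1 and k ≥ 1, the word a^(n+k) b a^n b (over the alphabet {a,b}) is primitive, i.e., it is not a proper power u^m with m ≥ 2. -/
/-!
Counting the letter `b` shows that `w = u ^ m` forces `m ∣ 2`, so a non-trivial power is a
square `u u` with `u = a^p b a^q`. Then `u u = a^p b a^(q+p) b a^q`, and comparing blocks of `a`
with `a^(n+k) b a^n b` gives `p = n + k`, `q + p = n` and `q = 0`, impossible when `k ≥ 1`.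
-/

/-- The two-letter alphabet {a, b}. -/
inductive AB : Type
  | a : AB
  | b : AB

/-- The `m`-th power of a word `u` (concatenation of `m` copies of `u`). -/
def wpow {α : Type*} (u : List α) (m : ℕ) : List α := (List.replicate m u).flatten

/-- A word is primitive if `w = u^m` implies `m = 1`. -/
def Primitive {α : Type*} (w : List α) : Prop :=
  ∀ (u : List α) (m : ℕ), w = wpow u m → m = 1

deriving instance DecidableEq for AB

open List

section Power

variable {α : Type*}

theorem wpow_two (u : List α) : wpow u 2 = u ++ u := by
  simp [wpow, replicate_succ]

theorem count_wpow [BEq α] (u : List α) (m : ℕ) (x : α) :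
    (wpow u m).count x = m * u.count x := by
  simp [wpow, count_flatten, sum_replicate]

theorem dvd_count_wpow [BEq α] (u : List α) (m : ℕ) (x : α) : m ∣ (wpow u m).count x :=
  count_wpow u m x ▸ dvd_mul_right m _

theorem replicate_append_cons_inj {x y : α} (hxy : x ≠ y) {p q : ℕ} {s t : List α}
    (h : replicate p x ++ y :: s = replicate q x ++ y :: t) : p = q ∧ s = t := by
  induction p generalizing q with
  | zero => cases q <;> simp_all [replicate_succ, eq_comm]
  | succ p ih =>
    cases q with
    | zero => simp_all [replicate_succ]
    | succ q => simpa using ih (by simpa [replicate_succ] using h)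

end Power

namespace AB

theorem eq_replicate_a_of_count_b_eq_zero {l : List AB} (h : l.count b = 0) :
    l = replicate l.length a :=
  eq_replicate_iff.2 ⟨rfl, fun
    | a, _ => rfl
    | b, hb => absurd hb (count_eq_zero.1 h)⟩

theorem exists_eq_of_count_b_eq_one {u : List AB} (h : u.count b = 1) :
    ∃ p q, u = replicate p a ++ b :: replicate q a := by
  obtain ⟨v, s, rfl⟩ := append_of_mem (count_pos_iff.1 (h ▸ Nat.one_pos))
  obtain ⟨hv, hs⟩ : v.count b = 0 ∧ s.count b = 0 := by
    simp at h
    omega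
  exact ⟨v.length, s.length, by
    rw [← eq_replicate_a_of_count_b_eq_zero hv, ← eq_replicate_a_of_count_b_eq_zero hs]⟩

theorem ne_append_self {n k : ℕ} (hk : k ≠ 0) (u : List AB) :
    replicate (n + k) a ++ [b] ++ replicate n a ++ [b] ≠ u ++ u := by
  intro h
  have hu : u.count b = 1 := by
    have := congrArg (count b) h
    simp [count_replicate] at this
    omega
  obtain ⟨p, q, rfl⟩ := exists_eq_of_count_b_eq_one hu
  have h' : replicate (n + k) a ++ b :: (replicate n a ++ [b]) =
      replicate p a ++ b :: (replicate (q + p) a ++ b :: replicate q a) := by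
    simpa only [append_assoc, cons_append, nil_append, replicate_add q p] using h
  obtain ⟨rfl, hrest⟩ := replicate_append_cons_inj (by decide) h'
  obtain ⟨hn, hq⟩ := replicate_append_cons_inj (by decide) hrest
  simp only [nil_eq, replicate_eq_nil_iff] at hq
  omega

end AB

theorem stmt_0_general (n k : ℕ) (hk : 1 ≤ k) :
    Primitive (List.replicate (n + k) AB.a ++ [AB.b] ++ List.replicate n AB.a ++ [AB.b]) := by
  intro u m h
  have hdvd : m ∣ 2 := by
    have := dvd_count_wpow u m AB.b
    rw [← h] at this
    simpa [count_replicate] using this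
  rcases (Nat.dvd_prime Nat.prime_two).1 hdvd with rfl | rfl
  · rfl
  · exact absurd (h.trans (wpow_two u)) (AB.ne_append_self (by omega) u)

/-- For any n ≥ 1 and k ≥ 1, the word a^(n+k) b a^n b is primitive. -/
theorem stmt_0 (n k : ℕ) (hn : 1 ≤ n) (hk : 1 ≤ k) :
    Primitive (List.replicate (n + k) AB.a ++ [AB.b] ++ List.replicate n AB.a ++ [AB.b]) :=
  stmt_0_general n k hk
end

section
/- Let Σ be an alphabet with marked copy alphabet Σ̄ (a disjoint copy of Σ, with the marking map w ↦ w̄ applied letterwise). If the language L_Σ = ⋃_{w ∈ Σ*} (w ⧢ w̄) were context-free and |Σ| ≥ 2, then the copy language {ww : w ∈ Σ*} would be context-free. Hence L_Σ is not context-free for |Σ| ≥ 2. -/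
/-- `Shuffle u v w` means `w` is an interleaving (shuffle) of `u` and `v`. -/
inductive Shuffle {α : Type*} : List α → List α → List α → Prop
  | nil : Shuffle [] [] []
  | left {a : α} {u v w : List α} : Shuffle u v w → Shuffle (a :: u) v (a :: w)
  | right {a : α} {u v w : List α} : Shuffle u v w → Shuffle u (a :: v) (a :: w)

/-- `L_Σ = ⋃_{w ∈ Σ*} (w ⧢ w̄)`, over the alphabet `α ⊕ α` whose left component is `Σ`
and whose right component is the marked copy alphabet `Σ̄`. -/
def markedSelfShuffle (α : Type) : Language (α ⊕ α) :=
  {w | ∃ u : List α, Shuffle (u.map Sum.inl) (u.map Sum.inr) w}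

/-!
Reading a word of `L_Σ` through `Sum.getLeft?` and through `Sum.getRight?` gives the same word
of `Σ*`. Pump down `aⁿ bⁿ āⁿ b̄ⁿ`, with `n` beyond the pumping constant: the removed factors `v`,
`y` lie in a window of length less than `n`, and since the pumped-down word is again in `L_Σ`,
`vy` contains as many copies of each `c` as of `c̄`. So some `c` and `c̄` both occur in that
window, whereas in `aⁿ bⁿ āⁿ b̄ⁿ` they are more than `n` letters apart. Hence `L_Σ` is not
context-free, and the implication in the theorem holds vacuously.

The pump-down half of the pumping lemma comes from parse trees. Let `m` bound the lengths of
right-hand sides and `K` be the number of rules. Following a longest child from a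
parse-tree node with yield of length in `(m ^ K, m ^ (K + 1)]` passes `K + 1` nonterminal nodes
with strictly shrinking yields; two of them carry the same nonterminal, and the yield of the lower
one may replace that of the upper one.
-/

lemma List.exists_split_of_forall₂_append {α β : Type*} {R : α → β → Prop} {l₁ l₂ : List α}
    {m : List β} (h : List.Forall₂ R (l₁ ++ l₂) m) :
    ∃ m₁ m₂, m = m₁ ++ m₂ ∧ List.Forall₂ R l₁ m₁ ∧ List.Forall₂ R l₂ m₂ :=
  ⟨m.take l₁.length, m.drop l₁.length, (List.take_append_drop _ _).symm,
    by simpa using List.forall₂_take l₁.length h, by simpa using List.forall₂_drop l₁.length h⟩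

lemma List.subset_take_of_length_le {α : Type*} {L s R : List α} {k : ℕ}
    (hk : L.length + s.length ≤ k) : s ⊆ (L ++ s ++ R).take k := by
  rw [List.take_append, List.take_of_length_le (by simpa)]
  exact fun t ht => by simp [ht]

lemma List.subset_drop_of_le_length {α : Type*} {L s R : List α} {k : ℕ}
    (hk : k ≤ L.length) : s ⊆ (L ++ s ++ R).drop k := by
  rw [List.append_assoc, List.drop_append_of_le_length hk]
  exact fun t ht => by simp [ht]

namespace ContextFreeGrammar

variable {T : Type*} {g : ContextFreeGrammar T}

/-- `g.YieldsWithin h s w`: some parse tree of height at most `h` rooted at `s` has yield `w`. -/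
def YieldsWithin (g : ContextFreeGrammar T) : ℕ → Symbol T g.NT → List T → Prop
  | 0, _, _ => False
  | _ + 1, .terminal t, w => w = [t]
  | h + 1, .nonterminal A, w => ∃ r ∈ g.rules, r.input = A ∧
      ∃ ws : List (List T), w = ws.flatten ∧ List.Forall₂ (g.YieldsWithin h) r.output ws

lemma yieldsWithin_zero {s : Symbol T g.NT} {w : List T} : ¬ g.YieldsWithin 0 s w :=
  fun h => h

lemma YieldsWithin.mono {h h' : ℕ} (hh : h ≤ h') {s : Symbol T g.NT} {w : List T}
    (hs : g.YieldsWithin h s w) : g.YieldsWithin h' s w := by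
  induction h generalizing h' s w with
  | zero => exact absurd hs yieldsWithin_zero
  | succ h ih =>
    obtain ⟨h', rfl⟩ := Nat.exists_eq_add_of_le' (Nat.lt_of_lt_of_le h.succ_pos hh)
    cases s with
    | terminal t => exact hs
    | nonterminal A =>
      obtain ⟨r, hr, hA, ws, hw, hws⟩ := hs
      exact ⟨r, hr, hA, ws, hw, hws.imp fun _ _ => ih (by omega)⟩

lemma derives_flatten_of_forall₂ {R : Symbol T g.NT → List T → Prop}
    (hR : ∀ {s w}, R s w → g.Derives [s] (w.map .terminal)) {ss : List (Symbol T g.NT)}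
    {ws : List (List T)} (hss : List.Forall₂ R ss ws) :
    g.Derives ss (ws.flatten.map .terminal) := by
  induction hss with
  | nil => exact .refl []
  | @cons s w ss ws hsw _ ih =>
    simpa using ((hR hsw).append_right ss).trans (ih.append_left (w.map .terminal))

lemma YieldsWithin.derives {h : ℕ} {s : Symbol T g.NT} {w : List T}
    (hs : g.YieldsWithin h s w) : g.Derives [s] (w.map .terminal) := by
  induction h generalizing s w with
  | zero => exact absurd hs yieldsWithin_zero
  | succ h ih =>
    cases s with
    | terminal t => rw [show w = [t] from hs]; rfl
    | nonterminal A =>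
      obtain ⟨r, hr, rfl, ws, rfl, hws⟩ := hs
      exact Produces.trans_derives ⟨r, hr, .input_output⟩ (derives_flatten_of_forall₂ ih hws)

lemma YieldsWithin.exists_rule {h : ℕ} {A : g.NT} {w : List T}
    (hA : g.YieldsWithin h (.nonterminal A) w) : ∃ r ∈ g.rules, r.input = A := by
  cases h with
  | zero => exact absurd hA yieldsWithin_zero
  | succ h =>
    obtain ⟨r, hr, hrA, -⟩ := hA
    exact ⟨r, hr, hrA⟩

lemma exists_forall₂_yieldsWithin_of_derives {ss : List (Symbol T g.NT)} {w : List T}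
    (hss : g.Derives ss (w.map .terminal)) :
    ∃ h, ∃ ws : List (List T), w = ws.flatten ∧ List.Forall₂ (g.YieldsWithin h) ss ws := by
  induction hss using Relation.ReflTransGen.head_induction_on with
  | refl =>
    refine ⟨1, ?_⟩
    induction w with
    | nil => exact ⟨[], rfl, .nil⟩
    | cons t w ih =>
      obtain ⟨ws, rfl, hws⟩ := ih
      exact ⟨[t] :: ws, rfl, .cons rfl hws⟩
  | head hprod _ ih =>
    obtain ⟨h, ws, rfl, hws⟩ := ih
    obtain ⟨r, hr, hrw⟩ := hprod
    obtain ⟨p, q, rfl, rfl⟩ := hrw.exists_parts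
    obtain ⟨wpr, wq, rfl, hpr, hq⟩ := List.exists_split_of_forall₂_append hws
    obtain ⟨wp, wr, rfl, hp, hr'⟩ := List.exists_split_of_forall₂_append hpr
    have hnode : g.YieldsWithin (h + 1) (.nonterminal r.input) wr.flatten :=
      ⟨r, hr, rfl, wr, rfl, hr'⟩
    refine ⟨h + 1, wp ++ [wr.flatten] ++ wq, by simp, ?_⟩
    exact List.rel_append (List.rel_append (hp.imp fun _ _ => .mono h.le_succ)
      (.cons hnode .nil)) (hq.imp fun _ _ => .mono h.le_succ)

lemma exists_yieldsWithin_of_mem_language {w : List T} (hw : w ∈ g.language) :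
    ∃ h, g.YieldsWithin h (.nonterminal g.initial) w := by
  obtain ⟨h, ws, rfl, hws⟩ := exists_forall₂_yieldsWithin_of_derives hw
  obtain ⟨w, rest, hroot, hrest, rfl⟩ := List.forall₂_cons_left_iff.mp hws
  obtain rfl := List.forall₂_nil_left_iff.mp hrest
  exact ⟨h, by simpa using hroot⟩

lemma exists_longest_child {h : ℕ} {ss : List (Symbol T g.NT)} {ws : List (List T)}
    (hws : List.Forall₂ (g.YieldsWithin h) ss ws) (hne : ws ≠ []) :
    ∃ u s x z, ws.flatten = u ++ x ++ z ∧ ws.flatten.length ≤ ss.length * x.length ∧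
      g.Derives ss (u.map .terminal ++ [s] ++ z.map .terminal) ∧ g.YieldsWithin h s x := by
  classical
  obtain ⟨x, hx, hmax⟩ := ws.toFinset.exists_max_image List.length (by simpa using hne)
  simp only [List.mem_toFinset] at hx hmax
  have hsum : (ws.map List.length).sum ≤ ws.length • x.length :=
    ws.length_map List.length ▸ List.sum_le_card_nsmul _ _ (List.forall_mem_map.mpr hmax)
  obtain ⟨ws₁, ws₂, rfl⟩ := List.append_of_mem hx
  obtain ⟨s, ss₂, hs, hss₂, hdrop⟩ := List.forall₂_cons_right_iff.mp
    (List.forall₂_drop_append ss ws₁ (x :: ws₂) hws)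
  have hss₁ := List.forall₂_take_append ss ws₁ (x :: ws₂) hws
  have hsplit : ss = ss.take ws₁.length ++ s :: ss₂ := by rw [← hdrop, List.take_append_drop]
  refine ⟨ws₁.flatten, s, x, ws₂.flatten, by simp, ?_, ?_, hs⟩
  · rwa [List.length_flatten, hws.length_eq, ← smul_eq_mul]
  · rw [hsplit]
    have h₁ := (derives_flatten_of_forall₂ YieldsWithin.derives hss₁).append_right (s :: ss₂)
    have h₂ := (derives_flatten_of_forall₂ YieldsWithin.derives hss₂).append_left
      (ws₁.flatten.map .terminal ++ [s])
    simpa using h₁.trans (by simpa using h₂)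

def maxOutputLength (g : ContextFreeGrammar T) : ℕ :=
  g.rules.sup fun r => r.output.length

lemma output_length_le_maxOutputLength {r : ContextFreeRule T g.NT} (hr : r ∈ g.rules) :
    r.output.length ≤ g.maxOutputLength :=
  Finset.le_sup (f := fun r => r.output.length) hr

def DerivesInContext (g : ContextFreeGrammar T) (A : g.NT) (u : List T) (B : g.NT)
    (z : List T) : Prop :=
  g.Derives [.nonterminal A] (u.map .terminal ++ [.nonterminal B] ++ z.map .terminal)

section DerivesInContext

variable {A B C : g.NT} {u z u' z' x : List T}

lemma DerivesInContext.trans (h₁ : g.DerivesInContext A u B z)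
    (h₂ : g.DerivesInContext B u' C z') : g.DerivesInContext A (u ++ u') C (z' ++ z) := by
  have := (h₂.append_left (u.map .terminal)).append_right (z.map .terminal)
  simpa [DerivesInContext] using Derives.trans h₁ (by simpa using this)

lemma DerivesInContext.derives (h₁ : g.DerivesInContext A u B z)
    (h₂ : g.Derives [.nonterminal B] (x.map .terminal)) :
    g.Derives [.nonterminal A] ((u ++ x ++ z).map .terminal) := by
  have := (h₂.append_left (u.map .terminal)).append_right (z.map .terminal)
  simpa using Derives.trans h₁ (by simpa using this)

end DerivesInContext

lemma YieldsWithin.exists_shrinking_descendant {h : ℕ} {A : g.NT} {w : List T}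
    (hA : g.YieldsWithin h (.nonterminal A) w) (hw : g.maxOutputLength < w.length) :
    ∃ u B x z h', w = u ++ x ++ z ∧ u ++ z ≠ [] ∧ w.length ≤ g.maxOutputLength * x.length ∧
      g.DerivesInContext A u B z ∧ g.YieldsWithin h' (.nonterminal B) x := by
  induction h generalizing A w with
  | zero => exact absurd hA yieldsWithin_zero
  | succ h ih =>
    obtain ⟨r, hr, rfl, ws, rfl, hws⟩ := hA
    obtain ⟨u, s, x, z, hsplit, hlen, hder, hs⟩ :=
      exists_longest_child hws (by rintro rfl; simp at hw)
    have hlen' : ws.flatten.length ≤ g.maxOutputLength * x.length :=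
      hlen.trans (Nat.mul_le_mul_right _ (output_length_le_maxOutputLength hr))
    obtain ⟨B, rfl⟩ : ∃ B, s = .nonterminal B := by
      cases h with
      | zero => exact absurd hs yieldsWithin_zero
      | succ h =>
        cases s with
        | terminal t =>
          rw [show x = [t] from hs, List.length_singleton, mul_one] at hlen'; omega
        | nonterminal B => exact ⟨B, rfl⟩
    have hctx : g.DerivesInContext r.input u B z :=
      Produces.trans_derives ⟨r, hr, .input_output⟩ hder
    by_cases huz : u ++ z = []
    · obtain ⟨rfl, rfl⟩ := List.append_eq_nil_iff.mp huz
      rw [hsplit, List.nil_append, List.append_nil] at hw ⊢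
      obtain ⟨u', C, x', z', h', hx, huz', hlen'', hctx', hC⟩ := ih hs hw
      exact ⟨u', C, x', z', h', hx, huz', hlen'', by simpa using hctx.trans hctx', hC⟩
    · exact ⟨u, B, x, z, h, hsplit, huz, hlen', hctx, hs⟩

def PumpsDown (g : ContextFreeGrammar T) (p : ℕ) (A : g.NT) (w : List T) : Prop :=
  ∃ u v x y z, w = u ++ v ++ x ++ y ++ z ∧ v ++ y ≠ [] ∧ (v ++ x ++ y).length ≤ p ∧
    g.Derives [.nonterminal A] ((u ++ x ++ z).map .terminal)

section PumpsDown

variable {p q : ℕ} {A B : g.NT} {u z x w : List T}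

lemma PumpsDown.mono (hpq : p ≤ q) : g.PumpsDown p A w → g.PumpsDown q A w
  | ⟨u, v, x, y, z, hw, hvy, hp, hd⟩ => ⟨u, v, x, y, z, hw, hvy, hp.trans hpq, hd⟩

lemma DerivesInContext.pumpsDown (hctx : g.DerivesInContext A u B z) :
    g.PumpsDown p B w → g.PumpsDown p A (u ++ w ++ z)
  | ⟨u', v, x, y, z', hw, hvy, hp, hd⟩ =>
    ⟨u ++ u', v, x, y, z' ++ z, by simp [hw], hvy, hp, by simpa using hctx.derives hd⟩

lemma pumpsDown_of_derives_infix (huz : u ++ z ≠ [])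
    (hx : g.Derives [.nonterminal A] (x.map .terminal)) :
    g.PumpsDown (u ++ x ++ z).length A (u ++ x ++ z) :=
  ⟨[], u, x, z, [], by simp, huz, le_rfl, by simpa using hx⟩

end PumpsDown

section Descent

variable {h : ℕ} {A : g.NT} {w : List T}

lemma YieldsWithin.pumpsDown_or_card_eq (k : ℕ) (hA : g.YieldsWithin h (.nonterminal A) w)
    (hw : g.maxOutputLength ^ k < w.length) :
    g.PumpsDown w.length A w ∨ ∃ S : Finset g.NT, S.card = k + 1 ∧
      (∀ B ∈ S, ∃ r ∈ g.rules, r.input = B) ∧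
      ∀ B ∈ S, ∃ u x z, w = u ++ x ++ z ∧ g.Derives [.nonterminal B] (x.map .terminal) := by
  classical
  induction k generalizing h A w with
  | zero =>
    refine .inr ⟨{A}, rfl, by simpa using hA.exists_rule, ?_⟩
    simp only [Finset.mem_singleton, forall_eq]
    exact ⟨[], w, [], by simp, hA.derives⟩
  | succ k ih =>
    obtain ⟨u, B, x, z, h', rfl, huz, hlen, hctx, hB⟩ :=
      hA.exists_shrinking_descendant ((Nat.le_self_pow k.succ_ne_zero _).trans_lt hw)
    have hx : g.maxOutputLength ^ k < x.length :=
      Nat.lt_of_mul_lt_mul_left (a := g.maxOutputLength) (by rw [← pow_succ']; omega)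
    rcases ih hB hx with hpump | ⟨S, hcard, hrules, hS⟩
    · exact .inl ((hctx.pumpsDown hpump).mono (by simp only [List.length_append]; omega))
    · by_cases hAS : A ∈ S
      · obtain ⟨u', x', z', rfl, hx'⟩ := hS A hAS
        have := pumpsDown_of_derives_infix (u := u ++ u') (z := z' ++ z) (by simp_all) hx'
        exact .inl (by simpa using this)
      · refine .inr ⟨insert A S, by rw [Finset.card_insert_of_notMem hAS, hcard], ?_, ?_⟩
        · simpa [hA.exists_rule] using hrules
        · intro C hC
          rcases Finset.mem_insert.mp hC with rfl | hC
          · exact ⟨[], u ++ x ++ z, [], by simp, hA.derives⟩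
          · obtain ⟨u', x', z', rfl, hx'⟩ := hS C hC
            exact ⟨u ++ u', x', z' ++ z, by simp, hx'⟩

lemma YieldsWithin.exists_descendant_length_mem_Ioc (n : ℕ)
    (hA : g.YieldsWithin h (.nonterminal A) w) (hw : g.maxOutputLength ^ (n + 1) < w.length) :
    ∃ u B x z h', w = u ++ x ++ z ∧ g.DerivesInContext A u B z ∧
      g.YieldsWithin h' (.nonterminal B) x ∧
      x.length ∈ Set.Ioc (g.maxOutputLength ^ n) (g.maxOutputLength ^ (n + 1)) := by
  induction hl : w.length using Nat.strong_induction_on generalizing h A w with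
  | _ l ih =>
  obtain ⟨u, B, x, z, h', rfl, huz, hlen, hctx, hB⟩ :=
    hA.exists_shrinking_descendant ((Nat.le_self_pow n.succ_ne_zero _).trans_lt hw)
  have hx : g.maxOutputLength ^ n < x.length :=
    Nat.lt_of_mul_lt_mul_left (a := g.maxOutputLength) (by rw [← pow_succ']; omega)
  by_cases hsmall : x.length ≤ g.maxOutputLength ^ (n + 1)
  · exact ⟨u, B, x, z, h', rfl, hctx, hB, hx, hsmall⟩
  · have hlt : x.length < l := by
      subst hl
      have : u.length + z.length ≠ 0 := by simpa using huz
      simp only [List.length_append]; omega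
    obtain ⟨u', C, x', z', h'', rfl, hctx', hC, hmem⟩ := ih _ hlt hB (not_le.mp hsmall) rfl
    exact ⟨u ++ u', C, x', z' ++ z, h'', by simp, hctx.trans hctx', hC, hmem⟩

end Descent

theorem pumping_down (g : ContextFreeGrammar T) :
    ∃ p, ∀ w ∈ g.language, p < w.length → ∃ u v x y z, w = u ++ v ++ x ++ y ++ z ∧
      v ++ y ≠ [] ∧ (v ++ x ++ y).length ≤ p ∧ u ++ x ++ z ∈ g.language := by
  classical
  refine ⟨g.maxOutputLength ^ (g.rules.card + 1), fun w hw hlen => ?_⟩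
  obtain ⟨h, hroot⟩ := exists_yieldsWithin_of_mem_language hw
  obtain ⟨u, B, x, z, h', rfl, hctx, hB, hlow, hup⟩ :=
    hroot.exists_descendant_length_mem_Ioc g.rules.card hlen
  rcases hB.pumpsDown_or_card_eq g.rules.card hlow with hpump | ⟨S, hcard, hrules, -⟩
  · exact (hctx.pumpsDown (hpump.mono hup))
  · have hsub : S ⊆ g.rules.image ContextFreeRule.input := fun B hB => by
      obtain ⟨r, hr, rfl⟩ := hrules B hB
      exact Finset.mem_image_of_mem _ hr
    have := (Finset.card_le_card hsub).trans Finset.card_image_le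
    omega

end ContextFreeGrammar

namespace Shuffle

variable {α β : Type*} {u v w : List α}

lemma append_right : ∀ u v : List α, Shuffle u v (u ++ v)
  | [], [] => nil
  | [], _ :: v => right (append_right [] v)
  | _ :: u, v => left (append_right u v)

lemma filterMap_eq_left {f : α → Option β} (h : Shuffle u v w) (hv : ∀ b ∈ v, f b = none) :
    w.filterMap f = u.filterMap f := by
  induction h with
  | nil => rfl
  | left _ ih => simp [List.filterMap_cons, ih hv]
  | right _ ih =>
    simp only [List.mem_cons, forall_eq_or_imp] at hv
    simp [hv.1, ih hv.2]

lemma filterMap_eq_right {f : α → Option β} (h : Shuffle u v w) (hu : ∀ a ∈ u, f a = none) :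
    w.filterMap f = v.filterMap f := by
  induction h with
  | nil => rfl
  | right _ ih => simp [List.filterMap_cons, ih hu]
  | left _ ih =>
    simp only [List.mem_cons, forall_eq_or_imp] at hu
    simp [hu.1, ih hu.2]

end Shuffle

namespace markedSelfShuffle

variable {α : Type}

lemma filterMap_getLeft_eq_getRight {w : List (α ⊕ α)} (hw : w ∈ markedSelfShuffle α) :
    w.filterMap Sum.getLeft? = w.filterMap Sum.getRight? := by
  obtain ⟨u, hu⟩ := hw
  rw [hu.filterMap_eq_left (by simp), hu.filterMap_eq_right (by simp)]
  simp [List.filterMap_map, Function.comp_def]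

lemma exists_inl_mem_and_inr_mem_of_mem {L v x y R : List (α ⊕ α)}
    (hw : L ++ v ++ x ++ y ++ R ∈ markedSelfShuffle α) (hw' : L ++ x ++ R ∈ markedSelfShuffle α)
    (hvy : v ++ y ≠ []) : ∃ c, .inl c ∈ v ++ y ∧ .inr c ∈ v ++ y := by
  classical
  have hperm : ((v ++ y).filterMap Sum.getLeft?).Perm ((v ++ y).filterMap Sum.getRight?) := by
    refine List.perm_iff_count.mpr fun c => ?_
    have h := congrArg (List.count c) (filterMap_getLeft_eq_getRight hw)
    have h' := congrArg (List.count c) (filterMap_getLeft_eq_getRight hw')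
    simp only [List.filterMap_append, List.count_append] at h h' ⊢
    omega
  obtain ⟨t | t, ht⟩ := List.exists_mem_of_ne_nil _ hvy
  · obtain ⟨s, hs, hst⟩ := List.mem_filterMap.mp
      (hperm.mem_iff.mp (List.mem_filterMap.mpr ⟨_, ht, rfl⟩))
    exact ⟨t, ht, by rwa [← Sum.getRight?_eq_some_iff.mp hst]⟩
  · obtain ⟨s, hs, hst⟩ := List.mem_filterMap.mp
      (hperm.mem_iff.mpr (List.mem_filterMap.mpr ⟨_, ht, rfl⟩))
    exact ⟨t, by rwa [← Sum.getLeft?_eq_some_iff.mp hst], ht⟩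

lemma inr_notMem_of_inl_mem_of_short_infix {a b c : α} (hab : a ≠ b) {n : ℕ}
    {L s R : List (α ⊕ α)}
    (hW : L ++ s ++ R = (List.replicate n a ++ List.replicate n b).map .inl ++
      (List.replicate n a ++ List.replicate n b).map .inr)
    (hs : s.length < n) (hl : .inl c ∈ s) : .inr c ∉ s := by
  intro hr
  have hlen := congrArg List.length hW
  simp only [List.length_append, List.length_map, List.length_replicate] at hlen
  rcases Nat.lt_or_ge (n + n) (L.length + s.length) with h₁ | h₁
  · rcases Nat.lt_or_ge L.length (n + n) with h₂ | h₂
    · have hb := List.subset_drop_of_le_length (R := R) (show n ≤ L.length by omega) hl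
      have ha := List.subset_take_of_length_le (R := R)
        (show L.length + s.length ≤ n + n + n by omega) hr
      rw [hW] at ha hb
      obtain ⟨-, rfl⟩ : n ≠ 0 ∧ c = a := by simpa [List.take_append] using ha
      exact hab (by simpa using hb : n ≠ 0 ∧ c = b).2
    · have := List.subset_drop_of_le_length (R := R) h₂ hl
      rw [hW] at this
      simp [List.drop_append] at this
  · have := List.subset_take_of_length_le (R := R) h₁ hr
    rw [hW] at this
    simp [List.take_append] at this

lemma not_isContextFree (h : ∃ a b : α, a ≠ b) : ¬ (markedSelfShuffle α).IsContextFree := by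
  obtain ⟨a, b, hab⟩ := h
  rintro ⟨g, hg⟩
  obtain ⟨p, hp⟩ := g.pumping_down
  rw [hg] at hp
  set u := List.replicate (p + 1) a ++ List.replicate (p + 1) b with hu
  have hW : u.map .inl ++ u.map .inr ∈ markedSelfShuffle α := ⟨u, Shuffle.append_right _ _⟩
  obtain ⟨L, v, x, y, R, hsplit, hvy, hlen, hpump⟩ :=
    hp _ hW (by simp only [hu, List.length_append, List.length_map, List.length_replicate]; omega)
  obtain ⟨c, hl, hr⟩ := exists_inl_mem_and_inr_mem_of_mem (hsplit ▸ hW) hpump hvy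
  have hsub : v ++ y ⊆ v ++ x ++ y := fun t ht => by
    simp only [List.mem_append] at ht ⊢; tauto
  exact inr_notMem_of_inl_mem_of_short_infix hab (n := p + 1) (L := L) (R := R)
    (by simp [← hu, hsplit]) (by omega) (hsub hl) (hsub hr)

end markedSelfShuffle

/-- If `L_Σ` were context-free (with `|Σ| ≥ 2`), then the copy language `{ww : w ∈ Σ*}`
would be context-free; hence `L_Σ` is not context-free. -/
theorem stmt_7 (α : Type) (h2 : ∃ a b : α, a ≠ b) :
    ((markedSelfShuffle α).IsContextFree →
      Language.IsContextFree ({w | ∃ u : List α, w = u ++ u} : Language α)) ∧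
    ¬ (markedSelfShuffle α).IsContextFree := by
  have h := markedSelfShuffle.not_isContextFree h2
  exact ⟨fun hcf => absurd hcf h, h⟩
end

section
/- For words over an alphabet containing distinct letters $ and #, and words w, u, v not containing $ or #: if $u#$v# belongs to the shuffle ($w#) ⧢ ($w#), then u = w and v = w. -/
namespace Shuffle

variable {α : Type*}

theorem symm {x y z : List α} (h : Shuffle x y z) : Shuffle y x z := by
  induction h with
  | nil => exact nil
  | left _ ih => exact right ih
  | right _ ih => exact left ih

theorem eq_of_nil_left {y z : List α} (h : Shuffle [] y z) : z = y := by
  generalize hx : ([] : List α) = x at h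
  induction h with
  | nil => rfl
  | left => cases hx
  | right _ ih => rw [ih hx]

theorem exists_eq_append_of_cons_right {d : α} {x y p q : List α} (hx : d ∉ x) (hp : d ∉ p)
    (h : Shuffle x (d :: y) (p ++ d :: q)) : ∃ x₂, x = p ++ x₂ ∧ Shuffle x₂ y q := by
  induction p generalizing x with
  | nil =>
    cases h with
    | left => exact absurd List.mem_cons_self hx
    | right h => exact ⟨x, rfl, h⟩
  | cons b p ih =>
    cases h with
    | left h =>
      obtain ⟨x₂, rfl, h₂⟩ := ih (fun hd => hx (List.mem_cons_of_mem _ hd))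
        (fun hd => hp (List.mem_cons_of_mem _ hd)) h
      exact ⟨x₂, rfl, h₂⟩
    | right => exact absurd List.mem_cons_self hp

end Shuffle

theorem List.eq_and_eq_nil_of_append_singleton_eq_append_cons {α : Type*} {s : α}
    {w u x : List α} (hs : s ∉ w) (h : w ++ [s] = u ++ s :: x) : w = u ∧ x = [] := by
  rcases List.append_eq_append_iff.mp h with ⟨a, rfl, ha⟩ | ⟨c, rfl, hc⟩
  · rcases a with _ | ⟨b, a⟩ <;> simp_all
  · rcases c with _ | ⟨b, c⟩ <;> simp_all

theorem eq_and_eq_of_shuffle_append_cons {α : Type*} {d s : α} {w u v : List α} (hds : d ≠ s)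
    (hdw : d ∉ w) (hsw : s ∉ w) (hdu : d ∉ u)
    (h : Shuffle (w ++ [s]) (d :: (w ++ [s])) ((u ++ [s]) ++ d :: (v ++ [s]))) :
    u = w ∧ v = w := by
  obtain ⟨x₂, hwu, h₂⟩ := h.exists_eq_append_of_cons_right (by simp [hdw, hds])
    (by simp [hdu, hds])
  rw [List.append_assoc, List.singleton_append] at hwu
  obtain ⟨rfl, rfl⟩ := List.eq_and_eq_nil_of_append_singleton_eq_append_cons hsw hwu
  exact ⟨rfl, List.append_cancel_right h₂.eq_of_nil_left⟩

theorem stmt_8_general {α : Type*} (d s : α) (w u v : List α) (hds : d ≠ s)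
    (hdw : d ∉ w) (hsw : s ∉ w) (hdu : d ∉ u)
    (h : Shuffle (d :: (w ++ [s])) (d :: (w ++ [s]))
        ((d :: (u ++ [s])) ++ (d :: (v ++ [s])))) :
    u = w ∧ v = w := by
  rw [List.cons_append] at h
  cases h with
  | left h => exact eq_and_eq_of_shuffle_append_cons hds hdw hsw hdu h
  | right h => exact eq_and_eq_of_shuffle_append_cons hds hdw hsw hdu h.symm

/-- If `$u#$v#` is in the shuffle `($w#) ⧢ ($w#)`, where the distinct markers `$`, `#`
do not occur in `w`, `u`, `v`, then `u = w` and `v = w`. -/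
theorem stmt_8 {α : Type*} (d s : α) (w u v : List α) (hds : d ≠ s)
    (hdw : d ∉ w) (hsw : s ∉ w) (hdu : d ∉ u) (hsu : s ∉ u) (hdv : d ∉ v) (hsv : s ∉ v)
    (h : Shuffle (d :: (w ++ [s])) (d :: (w ++ [s]))
        ((d :: (u ++ [s])) ++ (d :: (v ++ [s])))) :
    u = w ∧ v = w :=
  stmt_8_general d s w u v hds hdw hsw hdu h
end

section
/- Let g, h : Γ* → Δ* be monoid morphisms with Γ and Δ disjoint alphabets, and let L = {g(w) · reverse(u) · h(u) · reverse(w) : u, w ∈ Γ+}. Then L contains a square (a word of the form zz) if and only if there exists a nonempty word x ∈ Γ+ with g(x) = h(x). -/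
/-!
Split `z z = g(w) uʳ h(u) wʳ` at its midpoint. If the midpoint falls between `uʳ` and `h(u)`,
then `z = g(w) uʳ = h(u) wʳ`, so `u = w` and `g u = h u`. Otherwise one half of the word,
`g(w) uʳ` or `h(u) wʳ`, has the form `P Q P` with `P` nonempty and `Q` (the other half)
containing a `Γ`-letter. In a word `Δ* Γ*` no `Γ`-letter is followed by a `Δ`-letter, so
everything is a `Γ`-letter: `g w = h u = []` and one of `u`, `w` is a factor of the other. That
factor is then erased by both morphisms.
-/

open List Sum

theorem forall_of_pairwise_imp_append_append {α : Type*} {p : α → Prop} {P Q : List α}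
    (hl : (P ++ Q ++ P).Pairwise (fun a b => p a → p b)) (hP : P ≠ []) (hQ : ∃ a ∈ Q, p a) :
    ∀ b ∈ P ++ Q ++ P, p b := by
  simp only [pairwise_append, mem_append] at hl
  obtain ⟨a, haQ, ha⟩ := hQ
  have hPp : ∀ b ∈ P, p b := fun b hb => hl.2.2 a (.inr haQ) b hb ha
  obtain ⟨c, hc⟩ := exists_mem_of_ne_nil P hP
  have hQp : ∀ b ∈ Q, p b := fun b hb => hl.1.2.2 c hc b hb (hPp c hc)
  simp only [mem_append]
  rintro b ((hb | hb) | hb) <;> simp_all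

section Blocks

variable {Γ Δ : Type*}

theorem pairwise_isLeft_map_inr_append_map_inl (X : List Δ) (Y : List Γ) :
    (X.map inr ++ Y.map inl).Pairwise (fun a b : Γ ⊕ Δ => a.isLeft → b.isLeft) := by
  simp [pairwise_append, pairwise_map, pairwise_of_forall]

theorem filterMap_getLeft?_map_inr_append_map_inl (X : List Δ) (Y : List Γ) :
    (X.map inr ++ Y.map inl).filterMap getLeft? = Y := by
  simp [filterMap_map, Function.comp_def]

theorem filterMap_getRight?_map_inr_append_map_inl (X : List Δ) (Y : List Γ) :
    (X.map inr ++ Y.map inl).filterMap getRight? = X := by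
  simp [filterMap_map, Function.comp_def]

theorem map_inr_append_map_inl_inj {X X' : List Δ} {Y Y' : List Γ}
    (h : X.map inr ++ Y.map inl = X'.map inr ++ Y'.map inl) : X = X' ∧ Y = Y' := by
  have hr := congrArg (filterMap getRight?) h
  have hl := congrArg (filterMap getLeft?) h
  simp only [filterMap_getRight?_map_inr_append_map_inl,
    filterMap_getLeft?_map_inr_append_map_inl] at hr hl
  exact ⟨hr, hl⟩

theorem eq_nil_and_infix_of_map_inr_append_map_inl_eq {X X' : List Δ} {Y Y' : List Γ}
    {P : List (Γ ⊕ Δ)} (h : X.map inr ++ Y.map inl = P ++ (X'.map inr ++ Y'.map inl) ++ P)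
    (hP : P ≠ []) (hY' : Y' ≠ []) : X = [] ∧ X' = [] ∧ Y' <:+: Y := by
  obtain ⟨y, hy⟩ := exists_mem_of_ne_nil Y' hY'
  have hleft := forall_of_pairwise_imp_append_append (p := fun a => a.isLeft = true)
    (h ▸ pairwise_isLeft_map_inr_append_map_inl X Y) hP ⟨inl y, by simp [hy], rfl⟩
  have hX : X = [] := eq_nil_iff_forall_not_mem.mpr fun d hd => by
    simpa using hleft (inr d) (h ▸ by simp [hd])
  have hX' : X' = [] := eq_nil_iff_forall_not_mem.mpr fun d hd => by
    simpa using hleft (inr d) (by simp [hd])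
  subst hX hX'
  have hinfix : Y'.map inl <:+: Y.map inl := ⟨P, P, by simpa using h.symm⟩
  exact ⟨rfl, rfl, by simpa [filterMap_map, Function.comp_def] using hinfix.filterMap getLeft?⟩

theorem square_eq_map_inr_append_map_inl_cases {z : List (Γ ⊕ Δ)} {G H : List Δ}
    {U W : List Γ} (hU : U ≠ []) (hW : W ≠ [])
    (hz : z ++ z = G.map inr ++ U.map inl ++ H.map inr ++ W.map inl) :
    (G = H ∧ U = W) ∨ (G = [] ∧ H = [] ∧ (W <:+: U ∨ U <:+: W)) := by
  rw [append_assoc _ (H.map inr)] at hz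
  rcases append_eq_append_iff.mp hz with ⟨P, hGU, hz⟩ | ⟨P, hz, hHW⟩
  · rw [hz] at hGU
    rcases eq_or_ne P [] with rfl | hP
    · left
      exact map_inr_append_map_inl_inj (by simpa using hGU)
    · obtain ⟨hG, hH, hWU⟩ := eq_nil_and_infix_of_map_inr_append_map_inl_eq hGU hP hW
      exact .inr ⟨hG, hH, .inl hWU⟩
  · rw [hz, ← append_assoc] at hHW
    rcases eq_or_ne P [] with rfl | hP
    · left
      exact map_inr_append_map_inl_inj (by simpa using hHW.symm)
    · obtain ⟨hH, hG, hUW⟩ := eq_nil_and_infix_of_map_inr_append_map_inl_eq hHW hP hU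
      exact .inr ⟨hG, hH, .inr hUW⟩

end Blocks

theorem eq_nil_of_infix_of_map_append {α β : Type*} {f : List α → List β}
    (hf : ∀ x y, f (x ++ y) = f x ++ f y) {x y : List α} (hxy : x <:+: y) (hy : f y = []) :
    f x = [] := by
  obtain ⟨s, t, rfl⟩ := hxy
  rw [hf, hf] at hy
  simp_all

/-- For morphisms `g h : Γ* → Δ*` over disjoint alphabets (modelled as the two summands of
`Γ ⊕ Δ`), the language `L = {g(w)·uʳ·h(u)·wʳ : u, w ∈ Γ⁺}` contains a square `zz` iff
there is a nonempty `x` with `g x = h x`. -/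
theorem stmt_9 {Γ Δ : Type*} (g h : List Γ → List Δ)
    (hg : ∀ x y, g (x ++ y) = g x ++ g y) (hh : ∀ x y, h (x ++ y) = h x ++ h y) :
    (∃ z : List (Γ ⊕ Δ), z ++ z ∈
      {s | ∃ u w : List Γ, u ≠ [] ∧ w ≠ [] ∧
        s = (g w).map Sum.inr ++ u.reverse.map Sum.inl ++
            (h u).map Sum.inr ++ w.reverse.map Sum.inl}) ↔
    ∃ x : List Γ, x ≠ [] ∧ g x = h x := by
  constructor
  · rintro ⟨z, u, w, hu, hw, hz⟩
    rcases square_eq_map_inr_append_map_inl_cases (by simpa using hu) (by simpa using hw) hz with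
      ⟨hgh, huw⟩ | ⟨hgw, hhu, hwu | huw⟩
    · obtain rfl := reverse_injective huw
      exact ⟨u, hu, hgh⟩
    · exact ⟨w, hw, by rw [hgw, eq_nil_of_infix_of_map_append hh (reverse_infix.mp hwu) hhu]⟩
    · exact ⟨u, hu, by rw [hhu, eq_nil_of_infix_of_map_append hg (reverse_infix.mp huw) hgw]⟩
  · rintro ⟨x, hx, hgx⟩
    exact ⟨(g x).map inr ++ x.reverse.map inl, x, x, hx, hx, by simp [hgx]⟩
end

section
/- Let g, h : Σ* → Δ* be monoid morphisms, # ∉ Δ, and L = { # g(v) # # reverse(h(v)) # : v ∈ Σ+ }. Then L contains a palindrome if and only if there exists a nonempty v ∈ Σ+ with g(v) = h(v). -/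
theorem List.eq_of_append_cons_eq_append_cons_of_notMem {α : Type*} {x₁ x₂ z₁ z₂ : List α}
    {a : α} (h₁ : a ∉ x₁) (h₂ : a ∉ x₂) (h : x₁ ++ a :: z₁ = x₂ ++ a :: z₂) : x₁ = x₂ := by
  rw [List.append_eq_append_iff] at h
  rcases h with ⟨c, rfl, hc⟩ | ⟨c, rfl, hc⟩ <;> cases c <;> simp_all

/-- Both `x` and the reverse of `y` are delimited by the first `none` after the leading one. -/
theorem reverse_marked_eq_self_iff {α : Type*} (x y : List α) :
    (none :: x.map some ++ [none, none] ++ y.map some ++ [none]).reverse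
      = none :: x.map some ++ [none, none] ++ y.map some ++ [none] ↔ x = y.reverse := by
  constructor
  · intro hpal
    have hsplit : y.reverse.map some ++ none :: (none :: x.reverse.map some ++ [none])
        = x.map some ++ none :: (none :: y.map some ++ [none]) := by
      simpa using hpal
    have := List.eq_of_append_cons_eq_append_cons_of_notMem (by simp) (by simp) hsplit
    exact (List.map_injective_iff.2 (Option.some_injective α) this).symm
  · rintro rfl
    simp

theorem stmt_11_general {σ Δ : Type*} (g h : List σ → List Δ) :
    (∃ z : List (Option Δ),
      z ∈ {s | ∃ v : List σ, v ≠ [] ∧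
        s = none :: (g v).map some ++ [none, none] ++ ((h v).reverse.map some) ++ [none]} ∧
      z.reverse = z) ↔
    ∃ v : List σ, v ≠ [] ∧ g v = h v := by
  constructor
  · rintro ⟨_, ⟨v, hv, rfl⟩, hpal⟩
    exact ⟨v, hv, by simpa using (reverse_marked_eq_self_iff _ _).1 hpal⟩
  · rintro ⟨v, hv, hgh⟩
    exact ⟨_, ⟨v, hv, rfl⟩, (reverse_marked_eq_self_iff _ _).2 (by simp [hgh])⟩

/-- For morphisms `g h : Σ* → Δ*` and a marker `#` (modelled as `none` in `Option Δ`),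
the language `L = {#g(v)##(h(v))ʳ# : v ∈ Σ⁺}` contains a palindrome iff there is a
nonempty `v` with `g v = h v`. -/
theorem stmt_11 {σ Δ : Type*} (g h : List σ → List Δ)
    (hg : ∀ x y, g (x ++ y) = g x ++ g y) (hh : ∀ x y, h (x ++ y) = h x ++ h y) :
    (∃ z : List (Option Δ),
      z ∈ {s | ∃ v : List σ, v ≠ [] ∧
        s = none :: (g v).map some ++ [none, none] ++ ((h v).reverse.map some) ++ [none]} ∧
      z.reverse = z) ↔
    ∃ v : List σ, v ≠ [] ∧ g v = h v :=
  stmt_11_general g h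
end

section
/- For the regular language P = a^+ b^+ over {a,b}, the language M_P = ⋃_{w ∈ P} (w ⧢ reverse(w)) satisfies M_P ∩ a^* b^* a^* = {a^n b^(2m) a^n : n, m ≥ 1}, and hence M_P is not regular. -/
/-- `M_P = ⋃_{w ∈ P} (w ⧢ wʳ)` for `P = a⁺b⁺`. -/
def MP : Set (List AB) :=
  {z | ∃ w : List AB,
    (∃ n m : ℕ, 1 ≤ n ∧ 1 ≤ m ∧ w = List.replicate n AB.a ++ List.replicate m AB.b) ∧
    Shuffle w w.reverse z}

/-- Boolean test for the letter `a`. -/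
def isA : AB → Bool
  | .a => true
  | .b => false

lemma shuffle_length {α : Type*} {u v w : List α} (h : Shuffle u v w) :
    w.length = u.length + v.length := by
  induction h with
  | nil => rfl
  | left _ ih => simp [ih]; omega
  | right _ ih => simp [ih]; omega

lemma shuffle_countP {α : Type*} (p : α → Bool) {u v w : List α} (h : Shuffle u v w) :
    w.countP p = u.countP p + v.countP p := by
  induction h with
  | nil => rfl
  | left _ ih => simp [List.countP_cons, ih]; omega
  | right _ ih => simp [List.countP_cons, ih]; omega

lemma shuffle_nil_left {α : Type*} (v : List α) : Shuffle [] v v := by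
  induction v with
  | nil => exact .nil
  | cons a t ih => exact .right ih

lemma shuffle_nil_right {α : Type*} (u : List α) : Shuffle u [] u := by
  induction u with
  | nil => exact .nil
  | cons a t ih => exact .left ih

lemma shuffle_append {α : Type*} {u v w u' v' w' : List α} (h : Shuffle u v w)
    (h' : Shuffle u' v' w') : Shuffle (u ++ u') (v ++ v') (w ++ w') := by
  induction h with
  | nil => simpa using h'
  | left _ ih => exact .left ih
  | right _ ih => exact .right ih

lemma shuffle_reverse {α : Type*} {u v w : List α} (h : Shuffle u v w) :
    Shuffle u.reverse v.reverse w.reverse := by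
  induction h with
  | nil => exact .nil
  | @left a u v w _ ih =>
    simpa using shuffle_append ih (Shuffle.left (a := a) .nil)
  | @right a u v w _ ih =>
    simpa using shuffle_append ih (Shuffle.right (a := a) .nil)

lemma shuffle_takeWhile_le {u v w : List AB} (h : Shuffle u v w) :
    (w.takeWhile isA).length ≤ (u.takeWhile isA).length + (v.takeWhile isA).length := by
  induction h with
  | nil => simp
  | @left a u v w _ ih =>
    cases a <;> simp [List.takeWhile_cons, isA] <;> omega
  | @right a u v w _ ih =>
    cases a <;> simp [List.takeWhile_cons, isA] <;> omega

lemma tw_rep_a_cons_b (i : ℕ) (t : List AB) :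
    (List.takeWhile isA (List.replicate i AB.a ++ AB.b :: t)).length = i := by
  induction i with
  | zero => simp [List.takeWhile_cons, isA]
  | succ n ih => simpa [List.replicate_succ, List.takeWhile_cons, isA] using ih

lemma countP_rep_a (n : ℕ) : (List.replicate n AB.a).countP isA = n := by
  induction n with
  | zero => rfl
  | succ n ih => simp [List.replicate_succ, List.countP_cons, isA, ih]

lemma countP_rep_b (n : ℕ) : (List.replicate n AB.b).countP isA = 0 := by
  induction n with
  | zero => rfl
  | succ n ih => simp [List.replicate_succ, List.countP_cons, isA, ih]

/-- leading-a-count of `a^i b^j a^k` (with `j ≥ 1`) is `i`. -/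
lemma tw_word (i j k : ℕ) (hj : 1 ≤ j) :
    ((List.replicate i AB.a ++ List.replicate j AB.b ++ List.replicate k AB.a).takeWhile
      isA).length = i := by
  obtain ⟨j', rfl⟩ : ∃ j', j = j' + 1 := ⟨j - 1, by omega⟩
  rw [List.append_assoc, List.replicate_succ, List.cons_append]
  exact tw_rep_a_cons_b i _

lemma tw_word_rev (i j k : ℕ) (hj : 1 ≤ j) :
    (((List.replicate i AB.a ++ List.replicate j AB.b ++ List.replicate k AB.a).reverse).takeWhile
      isA).length = k := by
  have e : (List.replicate i AB.a ++ List.replicate j AB.b ++ List.replicate k AB.a).reverse =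
      List.replicate k AB.a ++ List.replicate j AB.b ++ List.replicate i AB.a := by
    simp only [List.reverse_append, List.reverse_replicate, List.append_assoc]
  rw [e]
  exact tw_word k j i hj

lemma tw_a_b (n m : ℕ) (hm : 1 ≤ m) :
    ((List.replicate n AB.a ++ List.replicate m AB.b).takeWhile isA).length = n := by
  obtain ⟨m', rfl⟩ : ∃ m', m = m' + 1 := ⟨m - 1, by omega⟩
  rw [List.replicate_succ]
  exact tw_rep_a_cons_b n _

lemma tw_b_head (m : ℕ) (hm : 1 ≤ m) (t : List AB) :
    ((List.replicate m AB.b ++ t).takeWhile isA).length = 0 := by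
  obtain ⟨m', rfl⟩ : ∃ m', m = m' + 1 := ⟨m - 1, by omega⟩
  simp [List.replicate_succ, List.takeWhile_cons, isA]

/-- Uniqueness of the `a^i b^j a^k` decomposition. -/
lemma rep_decomp_inj {i j k n m l : ℕ} (hj : 1 ≤ j) (hm : 1 ≤ m)
    (h : List.replicate i AB.a ++ List.replicate j AB.b ++ List.replicate k AB.a =
      List.replicate n AB.a ++ List.replicate m AB.b ++ List.replicate l AB.a) :
    i = n ∧ j = m ∧ k = l := by
  have hL := tw_word i j k hj
  have hR := tw_word n m l hm
  rw [h, hR] at hL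
  have hL' := tw_word_rev i j k hj
  have hR' := tw_word_rev n m l hm
  rw [h, hR'] at hL'
  have h3 := congrArg List.length h
  simp only [List.length_append, List.length_replicate] at h3
  exact ⟨hL.symm, by omega, hL'.symm⟩

/-- Membership in `M_P` of `a^n b^(2m) a^n`. -/
lemma mem_MP (n m : ℕ) (hn : 1 ≤ n) (hm : 1 ≤ m) :
    List.replicate n AB.a ++ List.replicate (2 * m) AB.b ++ List.replicate n AB.a ∈ MP := by
  refine ⟨List.replicate n AB.a ++ List.replicate m AB.b, ⟨n, m, hn, hm, rfl⟩, ?_⟩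
  have key : Shuffle (List.replicate n AB.a ++ List.replicate m AB.b)
      (List.replicate m AB.b ++ List.replicate n AB.a)
      ((List.replicate n AB.a ++ List.replicate m AB.b) ++
        (List.replicate m AB.b ++ List.replicate n AB.a)) := by
    simpa using shuffle_append (shuffle_nil_right (List.replicate n AB.a ++ List.replicate m AB.b))
      (shuffle_nil_left (List.replicate m AB.b ++ List.replicate n AB.a))
  have hrev : (List.replicate n AB.a ++ List.replicate m AB.b).reverse =
      List.replicate m AB.b ++ List.replicate n AB.a := by
    simp [List.reverse_append, List.reverse_replicate]
  rw [hrev]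
  have h2m : List.replicate (2 * m) AB.b = List.replicate m AB.b ++ List.replicate m AB.b := by
    rw [← List.replicate_add]; congr 1; omega
  have : List.replicate n AB.a ++ List.replicate (2 * m) AB.b ++ List.replicate n AB.a =
      (List.replicate n AB.a ++ List.replicate m AB.b) ++
        (List.replicate m AB.b ++ List.replicate n AB.a) := by
    rw [h2m]; simp only [List.append_assoc]
  rw [this]
  exact key

/-- The key set equality. -/
lemma key_eq :
    MP ∩
        {z | ∃ i j k : ℕ, z = List.replicate i AB.a ++ List.replicate j AB.b ++
            List.replicate k AB.a} =
      {z | ∃ n m : ℕ, 1 ≤ n ∧ 1 ≤ m ∧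
          z = List.replicate n AB.a ++ List.replicate (2 * m) AB.b ++ List.replicate n AB.a} := by
  ext z
  constructor
  · rintro ⟨⟨w, ⟨n, m, hn, hm, rfl⟩, hsh⟩, ⟨i, j, k, rfl⟩⟩
    refine ⟨n, m, hn, hm, ?_⟩
    have hrev : (List.replicate n AB.a ++ List.replicate m AB.b).reverse =
        List.replicate m AB.b ++ List.replicate n AB.a := by
      simp [List.reverse_append, List.reverse_replicate]
    rw [hrev] at hsh
    -- counts
    have hcount := shuffle_countP isA hsh
    simp [List.countP_append, countP_rep_a, countP_rep_b] at hcount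
    have hlen := shuffle_length hsh
    simp at hlen
    -- j = 2m, i + k = 2n
    have hik : i + k = 2 * n := by omega
    have hjm : j = 2 * m := by omega
    -- leading a's: i ≤ n
    have hi : i ≤ n := by
      have h := shuffle_takeWhile_le hsh
      rw [tw_word i j k (by omega), tw_a_b n m hm, tw_b_head m hm] at h
      omega
    -- trailing a's: k ≤ n
    have hk : k ≤ n := by
      have h := shuffle_takeWhile_le (shuffle_reverse hsh)
      have e1 : (List.replicate n AB.a ++ List.replicate m AB.b).reverse =
          List.replicate m AB.b ++ List.replicate n AB.a := hrev
      have e2 : (List.replicate m AB.b ++ List.replicate n AB.a).reverse =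
          List.replicate n AB.a ++ List.replicate m AB.b := by
        simp [List.reverse_append, List.reverse_replicate]
      rw [tw_word_rev i j k (by omega), e1, e2, tw_a_b n m hm, tw_b_head m hm] at h
      omega
    have hi' : i = n := by omega
    have hk' : k = n := by omega
    rw [hi', hk', hjm]
  · rintro ⟨n, m, hn, hm, rfl⟩
    exact ⟨mem_MP n m hn hm, ⟨n, 2 * m, n, rfl⟩⟩

/-- `M_P ∩ a^* b^* a^* = {aⁿ b^(2m) aⁿ : n, m ≥ 1}`, hence `M_P` is not regular. -/
theorem stmt_12 :
    MP ∩
        {z | ∃ i j k : ℕ, z = List.replicate i AB.a ++ List.replicate j AB.b ++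
            List.replicate k AB.a} =
      {z | ∃ n m : ℕ, 1 ≤ n ∧ 1 ≤ m ∧
          z = List.replicate n AB.a ++ List.replicate (2 * m) AB.b ++ List.replicate n AB.a} ∧
    ¬ Language.IsRegular MP := by
  refine ⟨key_eq, ?_⟩
  rintro ⟨σ, _, M, hM⟩
  set p := Fintype.card σ with hp
  -- the word a^(p+1) b^2 a^(p+1)
  set x : List AB := List.replicate (p + 1) AB.a ++ List.replicate (2 * 1) AB.b ++
    List.replicate (p + 1) AB.a with hx
  have hxMP : x ∈ M.accepts := by
    rw [hM]; exact mem_MP (p + 1) 1 (by omega) (by omega)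
  have hxlen : p ≤ x.length := by simp [hx]; omega
  obtain ⟨y₁, y₂, y₃, hsplit, hlen12, hne, hpump⟩ := M.pumping_lemma hxMP hxlen
  -- y₁ ++ y₂ is a prefix of a^(p+1), so all a's
  have hpre : y₁ ++ y₂ <+: List.replicate (p + 1) AB.a := by
    have h1 : y₁ ++ y₂ <+: x := ⟨y₃, by rw [hsplit, List.append_assoc]⟩
    have h2 : List.replicate (p + 1) AB.a <+: x :=
      ⟨List.replicate (2 * 1) AB.b ++ List.replicate (p + 1) AB.a, by
        simp [hx, List.append_assoc]⟩
    exact List.prefix_of_prefix_length_le h1 h2 (by simpa using by omega)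
  have hall : ∀ c ∈ y₁ ++ y₂, c = AB.a := by
    intro c hc
    have := hpre.subset hc
    exact List.eq_of_mem_replicate this
  have hy1 : y₁ = List.replicate y₁.length AB.a :=
    List.eq_replicate_of_mem (fun c hc => hall c (List.mem_append_left _ hc))
  have hy2 : y₂ = List.replicate y₂.length AB.a :=
    List.eq_replicate_of_mem (fun c hc => hall c (List.mem_append_right _ hc))
  set s := y₁.length
  set t := y₂.length
  have ht : 1 ≤ t := by
    cases y₂ with
    | nil => exact absurd rfl hne
    | cons _ _ => simp [t]
  -- compute y₃
  have hy3 : y₃ = List.replicate (p + 1 - s - t) AB.a ++ List.replicate (2 * 1) AB.b ++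
      List.replicate (p + 1) AB.a := by
    have h := hsplit
    rw [hy1, hy2] at h
    have hst : s + t ≤ p + 1 := by omega
    have hrep : List.replicate (p + 1) AB.a =
        List.replicate s AB.a ++ List.replicate t AB.a ++ List.replicate (p + 1 - s - t) AB.a := by
      rw [← List.replicate_add, ← List.replicate_add]; congr 1; omega
    rw [hx, hrep] at h
    simp only [List.append_assoc] at h
    have hc := List.append_cancel_left (List.append_cancel_left h)
    rw [← hc, hrep]
    simp only [List.append_assoc]
  -- pumped word
  have hmem : y₁ ++ (y₂ ++ y₂) ++ y₃ ∈ M.accepts := by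
    apply hpump
    refine Language.mem_mul.2 ⟨y₁ ++ (y₂ ++ y₂), Language.mem_mul.2
      ⟨y₁, rfl, y₂ ++ y₂, ?_, rfl⟩, y₃, rfl, rfl⟩
    have : y₂ ++ y₂ = ([y₂, y₂] : List (List AB)).flatten := by simp
    rw [this]
    exact Language.join_mem_kstar (by intro y hy; simp at hy; subst hy; exact rfl)
  have hform : y₁ ++ (y₂ ++ y₂) ++ y₃ =
      List.replicate (p + 1 + t) AB.a ++ List.replicate (2 * 1) AB.b ++
        List.replicate (p + 1) AB.a := by
    rw [hy1, hy2, hy3]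
    have e : List.replicate (p + 1 + t) AB.a =
        List.replicate s AB.a ++ (List.replicate t AB.a ++ List.replicate t AB.a) ++
          List.replicate (p + 1 - s - t) AB.a := by
      rw [← List.replicate_add, ← List.replicate_add, ← List.replicate_add]; congr 1; omega
    rw [e]
    simp only [List.append_assoc]
  rw [hform] at hmem
  rw [hM] at hmem
  have hin : List.replicate (p + 1 + t) AB.a ++ List.replicate (2 * 1) AB.b ++
      List.replicate (p + 1) AB.a ∈
      {z | ∃ n m : ℕ, 1 ≤ n ∧ 1 ≤ m ∧
          z = List.replicate n AB.a ++ List.replicate (2 * m) AB.b ++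
            List.replicate n AB.a} := by
    rw [← key_eq]
    exact ⟨hmem, ⟨p + 1 + t, 2 * 1, p + 1, rfl⟩⟩
  obtain ⟨n, m, hn, hm, heq⟩ := hin
  obtain ⟨h1, h2, h3⟩ := rep_decomp_inj (by omega) (by omega) heq.symm
  omega
end
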